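/- Let ω ∈ [0,1], ϖ = ω² + (1−ω)², and let φ ∈ [0, π/2] satisfy cos(φ) = ω/√ϖ and sin(φ) = (1−ω)/√ϖ. Let d_1,…,d_N be nonzero complex numbers with arguments φ_i = arg(d_i) ∈ (φ − π/2, φ + π/2) and let q_1,…,q_N ≥ 0 satisfy ω·Re(d_i) + (1−ω)·Im(d_i) > q_i for each i (in particular ϖ|d_i|² > q_i²). For θ ∈ R define f_i(θ) = (ϖ|d_i|² − q_i²)/(ϖ(|d_i|·√ϖ·cos(φ_i − φ − θ) − q_i)) and f(θ) = max_{1≤i≤N} f_i(θ), on the feasible set of θ ∈ (−π, π) for which |d_i|·√ϖ·cos(φ_i − φ − θ) − q_i > 0 for all i (i.e., ω·Re(e^{−jθ}d_i) + (1−ω)·Im(e^{−jθ}d_i) > q_i for all i). Then f attains its minimum over the feasible set at a unique point θ* ∈ (−π, π), and θ* lies in the interval [min_i φ_i − φ, max_i φ_i − φ]. -/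

import Mathlib

/-!
Write `ψ i = arg d i - φ` and `A i = ‖d i‖ √ϖ`, so that `f i θ = c i / (A i cos (ψ i - θ) - q i)`
with `c i = (ϖ ‖d i‖² - q i²) / ϖ > 0`. Feasibility forces `|ψ i - θ| < π / 2` for every `i`, so
the feasible set is an open interval on which every denominator is positive and strictly concave.
Hence every `f i`, and their maximum `f`, is strictly convex there, which gives uniqueness; on the
sublevel set `{f ≤ f 0}` the denominators are bounded away from `0`, so it is compact and `f`
attains its minimum. Each `f i` decreases to the left of `ψ i` and increases to its right, so `f`
is strictly decreasing left of `min ψ` and strictly increasing right of `max ψ`; a minimizer,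
being an interior local minimum, lies in between.
-/

open Matrix Filter Kronecker

noncomputable section

/-- The ω-weighted linear functional `z ↦ ω·Re z + (1-ω)·Im z`. -/
def wlin (ω : ℝ) (z : ℂ) : ℝ := ω * z.re + (1 - ω) * z.im

/-- The ω-comparison matrix of a complex square matrix. -/
def omegaComp {N : Type*} [DecidableEq N] (ω : ℝ) (B : Matrix N N ℂ) : Matrix N N ℝ :=
  Matrix.of fun i j => if i = j then wlin ω (B i i) else -‖B i j‖

/-- A real square matrix is a nonsingular M-matrix: nonpositive off-diagonal entries and
`M *ᵥ u > 0` entrywise for some entrywise positive `u`. -/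
def IsNonsingMMatrix {N : Type*} [Fintype N] (M : Matrix N N ℝ) : Prop :=
  (∀ i j, i ≠ j → M i j ≤ 0) ∧ ∃ u : N → ℝ, (∀ i, 0 < u i) ∧ ∀ i, 0 < (M *ᵥ u) i

/-- Entrywise absolute value of a complex matrix. -/
def cabs {α β : Type*} (M : Matrix α β ℂ) : Matrix α β ℝ :=
  Matrix.of fun i j => ‖M i j‖

/-- `ϖ = ω² + (1−ω)²`. -/
def vpi (ω : ℝ) : ℝ := ω ^ 2 + (1 - ω) ^ 2

open Real Set Topology

section Order

variable {ι α β : Type*} [Finite ι] [Nonempty ι]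

lemma strictConvexOn_ciSup {E : Type*} [AddCommMonoid E] [Module ℝ E] {s : Set E}
    {f : ι → E → ℝ} (hf : ∀ i, StrictConvexOn ℝ s (f i)) :
    StrictConvexOn ℝ s (fun x => ⨆ i, f i x) := by
  refine ⟨(hf (Classical.arbitrary ι)).1, fun x hx y hy hxy a b ha hb hab => ?_⟩
  obtain ⟨i, hi⟩ := exists_eq_ciSup_of_finite (f := fun i => f i (a • x + b • y))
  dsimp only
  rw [← hi]
  calc f i (a • x + b • y) < a • f i x + b • f i y := (hf i).2 hx hy hxy ha hb hab
    _ ≤ a • (⨆ j, f j x) + b • ⨆ j, f j y := by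
      gcongr
      · exact le_ciSup (Finite.bddAbove_range (fun j => f j x)) i
      · exact le_ciSup (Finite.bddAbove_range (fun j => f j y)) i

variable [Preorder α] [ConditionallyCompleteLinearOrder β] {s : Set α}

lemma strictAntiOn_ciSup {f : ι → α → β} (hf : ∀ i, StrictAntiOn (f i) s) :
    StrictAntiOn (fun x => ⨆ i, f i x) s := by
  intro x hx y hy hxy
  obtain ⟨i, hi⟩ := exists_eq_ciSup_of_finite (f := fun i => f i y)
  dsimp only
  rw [← hi]
  exact (hf i hx hy hxy).trans_le (le_ciSup (Finite.bddAbove_range fun j => f j x) i)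

lemma strictMonoOn_ciSup {f : ι → α → β} (hf : ∀ i, StrictMonoOn (f i) s) :
    StrictMonoOn (fun x => ⨆ i, f i x) s := by
  intro x hx y hy hxy
  obtain ⟨i, hi⟩ := exists_eq_ciSup_of_finite (f := fun i => f i x)
  dsimp only
  rw [← hi]
  exact (hf i hx hy hxy).trans_le (le_ciSup (Finite.bddAbove_range fun j => f j y) i)

end Order

lemma StrictConcaveOn.strictConvexOn_div {E : Type*} [AddCommMonoid E] [Module ℝ E] {s : Set E}
    {g : E → ℝ} {c : ℝ} (hg : StrictConcaveOn ℝ s g) (hpos : ∀ x ∈ s, 0 < g x) (hc : 0 < c) :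
    StrictConvexOn ℝ s (fun x => c / g x) := by
  refine ⟨hg.1, fun x hx y hy hxy a b ha hb hab => ?_⟩
  have hgx := hpos x hx
  have hgy := hpos y hy
  have hinv := (convexOn_zpow (𝕜 := ℝ) (-1)).2 hgx hgy ha.le hb.le hab
  simp only [_root_.zpow_neg_one, smul_eq_mul] at hinv ⊢
  calc c / g (a • x + b • y) < c / (a * g x + b * g y) :=
        div_lt_div_of_pos_left hc (add_pos (mul_pos ha hgx) (mul_pos hb hgy))
          (by simpa using hg.2 hx hy hxy ha hb hab)
    _ = c * (a * g x + b * g y)⁻¹ := div_eq_mul_inv _ _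
    _ ≤ c * (a * (g x)⁻¹ + b * (g y)⁻¹) := by gcongr
    _ = a * (c / g x) + b * (c / g y) := by ring

section LocalMin

variable {α β : Type*} [TopologicalSpace α] [LinearOrder α] [Preorder β]
  {f : α → β} {s : Set α} {x : α}

lemma not_isLocalMin_of_strictAntiOn [(𝓝[>] x).NeBot] (hs : s ∈ 𝓝 x)
    (hf : StrictAntiOn f s) : ¬IsLocalMin f x := by
  intro hmin
  have h : ∀ᶠ y in 𝓝[>] x, (y ∈ s ∧ f x ≤ f y) ∧ x < y :=
    ((eventually_mem_set.2 hs).and hmin |>.filter_mono nhdsWithin_le_nhds).and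
      self_mem_nhdsWithin
  obtain ⟨y, ⟨hys, hxy⟩, hxy'⟩ := h.exists
  exact (hf (mem_of_mem_nhds hs) hys hxy').not_ge hxy

lemma not_isLocalMin_of_strictMonoOn [(𝓝[<] x).NeBot] (hs : s ∈ 𝓝 x)
    (hf : StrictMonoOn f s) : ¬IsLocalMin f x := by
  intro hmin
  have h : ∀ᶠ y in 𝓝[<] x, (y ∈ s ∧ f x ≤ f y) ∧ y < x :=
    ((eventually_mem_set.2 hs).and hmin |>.filter_mono nhdsWithin_le_nhds).and
      self_mem_nhdsWithin
  obtain ⟨y, ⟨hys, hxy⟩, hyx⟩ := h.exists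
  exact (hf hys (mem_of_mem_nhds hs) hyx).not_ge hxy

end LocalMin

lemma IsMinOn.of_sublevel_subset {α β : Type*} [LinearOrder β] {f : α → β} {s K : Set α}
    {x x₀ : α} (hmin : IsMinOn f K x) (hx₀ : x₀ ∈ K)
    (hsub : {y ∈ s | f y ≤ f x₀} ⊆ K) : IsMinOn f s x := by
  intro y hy
  rcases le_total (f y) (f x₀) with hle | hge
  · exact hmin (hsub ⟨hy, hle⟩)
  · exact (hmin hx₀).trans hge

lemma exists_le_of_isMinOn_of_strictAntiOn {ι : Type*} [Finite ι] {F : ℝ → ℝ} {s : Set ℝ}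
    {ψ : ι → ℝ} {x : ℝ} (hs : IsOpen s) (hx : x ∈ s) (hmin : IsMinOn F s x)
    (hF : StrictAntiOn F (s ∩ {y | ∀ i, y ≤ ψ i})) : ∃ i, ψ i ≤ x := by
  by_contra! h
  exact not_isLocalMin_of_strictAntiOn
    (inter_mem (hs.mem_nhds hx) (eventually_all.2 fun i => Iic_mem_nhds (h i))) hF
    (hmin.isLocalMin (hs.mem_nhds hx))

lemma exists_ge_of_isMinOn_of_strictMonoOn {ι : Type*} [Finite ι] {F : ℝ → ℝ} {s : Set ℝ}
    {ψ : ι → ℝ} {x : ℝ} (hs : IsOpen s) (hx : x ∈ s) (hmin : IsMinOn F s x)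
    (hF : StrictMonoOn F (s ∩ {y | ∀ i, ψ i ≤ y})) : ∃ i, x ≤ ψ i := by
  by_contra! h
  exact not_isLocalMin_of_strictMonoOn
    (inter_mem (hs.mem_nhds hx) (eventually_all.2 fun i => Ici_mem_nhds (h i))) hF
    (hmin.isLocalMin (hs.mem_nhds hx))

section Trig

variable {c A q ψ θ : ℝ}

lemma mem_Ioo_of_cos_sub_pos (hψ : |ψ| < π / 2) (hθ : θ ∈ Ioo (-π) π)
    (hcos : 0 < cos (ψ - θ)) : θ ∈ Ioo (ψ - π / 2) (ψ + π / 2) := by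
  have hψ' := abs_lt.1 hψ
  have hlt : |ψ - θ| < π / 2 := by
    by_contra! hge
    have hle : |ψ - θ| ≤ π + π / 2 := abs_le.2 ⟨by linarith [hθ.2], by linarith [hθ.1]⟩
    have := cos_nonpos_of_pi_div_two_le_of_le hge hle
    rw [cos_abs] at this
    linarith
  obtain ⟨h₁, h₂⟩ := abs_lt.1 hlt
  constructor <;> linarith

lemma strictConcaveOn_mul_cos_sub_sub (hA : 0 < A) :
    StrictConcaveOn ℝ (Icc (ψ - π / 2) (ψ + π / 2)) (fun θ => A * cos (ψ - θ) - q) := by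
  refine ⟨convex_Icc _ _, fun x hx y hy hxy a b ha hb hab => ?_⟩
  have hcos := strictConcaveOn_cos_Icc.2 (x := ψ - x) (y := ψ - y)
    ⟨by linarith [hx.2], by linarith [hx.1]⟩ ⟨by linarith [hy.2], by linarith [hy.1]⟩
    (by intro h; exact hxy (by linarith)) ha hb hab
  have harg : a • (ψ - x) + b • (ψ - y) = ψ - (a • x + b • y) := by
    simp only [smul_eq_mul]
    linear_combination ψ * hab
  rw [harg] at hcos
  simp only [smul_eq_mul] at hcos ⊢
  have hq : a * q + b * q = q := by rw [← add_mul, hab, one_mul]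
  linarith [mul_lt_mul_of_pos_left hcos hA]

lemma strictAntiOn_div_mul_cos_sub_sub (hc : 0 < c) (hA : 0 < A) {s : Set ℝ}
    (hpos : ∀ θ ∈ s, q < A * cos (ψ - θ)) (hs : s ⊆ Icc (ψ - π) ψ) :
    StrictAntiOn (fun θ => c / (A * cos (ψ - θ) - q)) s := by
  intro x hx y hy hxy
  have hcos : cos (ψ - x) < cos (ψ - y) :=
    strictAntiOn_cos ⟨by linarith [(hs hy).2], by linarith [(hs hy).1]⟩
      ⟨by linarith [(hs hx).2], by linarith [(hs hx).1]⟩ (by linarith)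
  exact div_lt_div_of_pos_left hc (sub_pos.2 (hpos x hx))
    (by nlinarith [mul_lt_mul_of_pos_left hcos hA])

lemma strictMonoOn_div_mul_cos_sub_sub (hc : 0 < c) (hA : 0 < A) {s : Set ℝ}
    (hpos : ∀ θ ∈ s, q < A * cos (ψ - θ)) (hs : s ⊆ Icc ψ (ψ + π)) :
    StrictMonoOn (fun θ => c / (A * cos (ψ - θ) - q)) s := by
  intro x hx y hy hxy
  have hcos : cos (y - ψ) < cos (x - ψ) :=
    strictAntiOn_cos ⟨by linarith [(hs hx).1], by linarith [(hs hx).2]⟩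
      ⟨by linarith [(hs hy).1], by linarith [(hs hy).2]⟩ (by linarith)
  rw [← cos_neg, neg_sub, ← cos_neg (x - ψ), neg_sub] at hcos
  exact div_lt_div_of_pos_left hc (sub_pos.2 (hpos y hy))
    (by nlinarith [mul_lt_mul_of_pos_left hcos hA])

end Trig

section Family

variable {ι : Type*}

def feasibleSet (A q ψ : ι → ℝ) : Set ℝ :=
  {θ | θ ∈ Ioo (-π) π ∧ ∀ i, q i < A i * cos (ψ i - θ)}

def maxRatio (c A q ψ : ι → ℝ) (θ : ℝ) : ℝ :=
  ⨆ i, c i / (A i * cos (ψ i - θ) - q i)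

variable {c A q ψ : ι → ℝ}

lemma mem_Ioo_of_mem_feasibleSet (hψ : ∀ i, |ψ i| < π / 2) (hq : ∀ i, 0 ≤ q i)
    (hA : ∀ i, 0 < A i) {θ : ℝ} (hθ : θ ∈ feasibleSet A q ψ) (i : ι) :
    θ ∈ Ioo (ψ i - π / 2) (ψ i + π / 2) :=
  mem_Ioo_of_cos_sub_pos (hψ i) hθ.1 (pos_of_mul_pos_right ((hq i).trans_lt (hθ.2 i)) (hA i).le)

lemma convex_feasibleSet (hψ : ∀ i, |ψ i| < π / 2) (hq : ∀ i, 0 ≤ q i) (hA : ∀ i, 0 < A i) :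
    Convex ℝ (feasibleSet A q ψ) := by
  have : feasibleSet A q ψ = Ioo (-π) π ∩
      ⋂ i, {θ ∈ Icc (ψ i - π / 2) (ψ i + π / 2) | 0 < A i * cos (ψ i - θ) - q i} := by
    ext θ
    simp only [mem_inter_iff, mem_iInter, mem_ofPred_eq, sub_pos]
    exact ⟨fun hθ => ⟨hθ.1, fun i =>
      ⟨Ioo_subset_Icc_self (mem_Ioo_of_mem_feasibleSet hψ hq hA hθ i), hθ.2 i⟩⟩,
      fun hθ => ⟨hθ.1, fun i => (hθ.2 i).2⟩⟩
  rw [this]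
  exact (convex_Ioo _ _).inter (convex_iInter fun i =>
    (strictConcaveOn_mul_cos_sub_sub (hA i)).concaveOn.convex_gt 0)

variable [Finite ι]

lemma isOpen_feasibleSet : IsOpen (feasibleSet A q ψ) := by
  have : feasibleSet A q ψ = Ioo (-π) π ∩ ⋂ i, {θ | q i < A i * cos (ψ i - θ)} := by
    ext θ
    simp [feasibleSet]
  rw [this]
  exact isOpen_Ioo.inter (isOpen_iInter_of_finite fun i => isOpen_lt continuous_const (by fun_prop))

variable [Nonempty ι]

lemma strictConvexOn_maxRatio (hψ : ∀ i, |ψ i| < π / 2) (hq : ∀ i, 0 ≤ q i)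
    (hA : ∀ i, 0 < A i) (hc : ∀ i, 0 < c i) :
    StrictConvexOn ℝ (feasibleSet A q ψ) (maxRatio c A q ψ) :=
  strictConvexOn_ciSup fun i =>
    ((strictConcaveOn_mul_cos_sub_sub (hA i)).subset
      (fun _ hθ => Ioo_subset_Icc_self (mem_Ioo_of_mem_feasibleSet hψ hq hA hθ i))
      (convex_feasibleSet hψ hq hA)).strictConvexOn_div (fun _ hθ => sub_pos.2 (hθ.2 i)) (hc i)

lemma strictAntiOn_maxRatio (hψ : ∀ i, |ψ i| < π / 2) (hq : ∀ i, 0 ≤ q i)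
    (hA : ∀ i, 0 < A i) (hc : ∀ i, 0 < c i) :
    StrictAntiOn (maxRatio c A q ψ) (feasibleSet A q ψ ∩ {θ | ∀ i, θ ≤ ψ i}) :=
  strictAntiOn_ciSup fun i =>
    strictAntiOn_div_mul_cos_sub_sub (hc i) (hA i) (fun _ hθ => hθ.1.2 i) fun _ hθ =>
      ⟨by linarith [(mem_Ioo_of_mem_feasibleSet hψ hq hA hθ.1 i).1, pi_pos], hθ.2 i⟩

lemma strictMonoOn_maxRatio (hψ : ∀ i, |ψ i| < π / 2) (hq : ∀ i, 0 ≤ q i)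
    (hA : ∀ i, 0 < A i) (hc : ∀ i, 0 < c i) :
    StrictMonoOn (maxRatio c A q ψ) (feasibleSet A q ψ ∩ {θ | ∀ i, ψ i ≤ θ}) :=
  strictMonoOn_ciSup fun i =>
    strictMonoOn_div_mul_cos_sub_sub (hc i) (hA i) (fun _ hθ => hθ.1.2 i) fun _ hθ =>
      ⟨hθ.2 i, by linarith [(mem_Ioo_of_mem_feasibleSet hψ hq hA hθ.1 i).2, pi_pos]⟩

lemma exists_isMinOn_maxRatio (hψ : ∀ i, |ψ i| < π / 2) (hq : ∀ i, 0 ≤ q i)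
    (hA : ∀ i, 0 < A i) (hc : ∀ i, 0 < c i) (hne : (feasibleSet A q ψ).Nonempty) :
    ∃ θ ∈ feasibleSet A q ψ, IsMinOn (maxRatio c A q ψ) (feasibleSet A q ψ) θ := by
  obtain ⟨θ₀, hθ₀⟩ := hne
  set M := maxRatio c A q ψ θ₀
  let i₀ : ι := Classical.arbitrary ι
  have hM : 0 < M := (div_pos (hc i₀) (sub_pos.2 (hθ₀.2 i₀))).trans_le
    (le_ciSup (Finite.bddAbove_range fun i => c i / (A i * cos (ψ i - θ₀) - q i)) i₀)
  -- Where `maxRatio ≤ M`, every denominator is at least `c i / M`: this sublevel set stays away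
  -- from the boundary of the feasible set, and the window around `ψ i₀` replaces `Ioo (-π) π`.
  set K := Icc (ψ i₀ - π / 2) (ψ i₀ + π / 2) ∩
    ⋂ i, {θ | c i / M ≤ A i * cos (ψ i - θ) - q i}
  have hKF : K ⊆ feasibleSet A q ψ := by
    rintro θ ⟨hθ, hθK⟩
    rw [mem_iInter] at hθK
    have := abs_lt.1 (hψ i₀)
    exact ⟨⟨by linarith [hθ.1], by linarith [hθ.2]⟩,
      fun i => sub_pos.1 ((div_pos (hc i) hM).trans_le (hθK i))⟩
  have hsub : {θ ∈ feasibleSet A q ψ | maxRatio c A q ψ θ ≤ M} ⊆ K := by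
    rintro θ ⟨hθ, hθM⟩
    refine ⟨Ioo_subset_Icc_self (mem_Ioo_of_mem_feasibleSet hψ hq hA hθ i₀),
      mem_iInter.2 fun i => (div_le_comm₀ (sub_pos.2 (hθ.2 i)) hM).1 ?_⟩
    exact (le_ciSup (Finite.bddAbove_range fun i => c i / (A i * cos (ψ i - θ) - q i)) i).trans
      hθM
  have hK : IsCompact K := isCompact_Icc.inter_right
    (isClosed_iInter fun i => isClosed_le continuous_const (by fun_prop))
  have hlsc : LowerSemicontinuousOn (maxRatio c A q ψ) K :=
    lowerSemicontinuousOn_ciSup (fun _ _ => Finite.bddAbove_range _) fun i =>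
      (continuousOn_const.div (by fun_prop)
        fun _ hθ => (sub_pos.2 ((hKF hθ).2 i)).ne').lowerSemicontinuousOn
  have hθ₀K : θ₀ ∈ K := hsub ⟨hθ₀, le_rfl⟩
  obtain ⟨θ, hθK, hmin⟩ := hlsc.exists_isMinOn ⟨θ₀, hθ₀K⟩ hK
  exact ⟨θ, hKF hθK, hmin.of_sublevel_subset hθ₀K hsub⟩

end Family

lemma vpi_pos (ω : ℝ) : 0 < vpi ω := by
  unfold vpi
  nlinarith [sq_nonneg (2 * ω - 1)]

lemma wlin_eq_norm_mul_cos {ω φ : ℝ} (hcos : cos φ = ω / √(vpi ω))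
    (hsin : sin φ = (1 - ω) / √(vpi ω)) (z : ℂ) :
    wlin ω z = ‖z‖ * √(vpi ω) * cos (Complex.arg z - φ) := by
  have hs : √(vpi ω) ≠ 0 := (sqrt_pos.2 (vpi_pos ω)).ne'
  rw [cos_sub, hcos, hsin, wlin, ← Complex.norm_mul_cos_arg, ← Complex.norm_mul_sin_arg]
  field_simp

theorem stmt18_general {N : ℕ} (hN : 0 < N) (ω : ℝ) (φ : ℝ)
    (hcos : Real.cos φ = ω / Real.sqrt (vpi ω))
    (hsin : Real.sin φ = (1 - ω) / Real.sqrt (vpi ω))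
    (d : Fin N → ℂ)
    (harg : ∀ i, Complex.arg (d i) ∈ Set.Ioo (φ - Real.pi / 2) (φ + Real.pi / 2))
    (q : Fin N → ℝ) (hq : ∀ i, 0 ≤ q i) (hdq : ∀ i, q i < wlin ω (d i)) :
    let Feas : Set ℝ := {θ | θ ∈ Set.Ioo (-Real.pi) Real.pi ∧ ∀ i, q i <
      ‖d i‖ * Real.sqrt (vpi ω) * Real.cos (Complex.arg (d i) - φ - θ)}
    let f : ℝ → ℝ := fun θ => ⨆ i, (vpi ω * ‖d i‖ ^ 2 - q i ^ 2) /
      (vpi ω * (‖d i‖ * Real.sqrt (vpi ω) *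
        Real.cos (Complex.arg (d i) - φ - θ) - q i))
    (∃! θstar : ℝ, θstar ∈ Feas ∧ ∀ θ ∈ Feas, f θstar ≤ f θ) ∧
    ∀ θstar : ℝ, (θstar ∈ Feas ∧ ∀ θ ∈ Feas, f θstar ≤ f θ) →
      θstar ∈ Set.Icc ((⨅ i, Complex.arg (d i)) - φ) ((⨆ i, Complex.arg (d i)) - φ) := by
  intro Feas f
  have : Nonempty (Fin N) := ⟨⟨0, hN⟩⟩
  set A : Fin N → ℝ := fun i => ‖d i‖ * √(vpi ω)
  set ψ : Fin N → ℝ := fun i => Complex.arg (d i) - φ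
  set c : Fin N → ℝ := fun i => (vpi ω * ‖d i‖ ^ 2 - q i ^ 2) / vpi ω
  have hdq' : ∀ i, q i < A i * cos (ψ i) := fun i => wlin_eq_norm_mul_cos hcos hsin (d i) ▸ hdq i
  have hψ : ∀ i, |ψ i| < π / 2 := fun i =>
    abs_lt.2 ⟨by linarith [(harg i).1], by linarith [(harg i).2]⟩
  have hqA : ∀ i, q i < A i := fun i =>
    (hdq' i).trans_le (mul_le_of_le_one_right (by positivity) (cos_le_one _))
  have hA : ∀ i, 0 < A i := fun i => (hq i).trans_lt (hqA i)
  have hc : ∀ i, 0 < c i := fun i => div_pos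
    (by nlinarith [hq i, hqA i, sq_sqrt (vpi_pos ω).le, sq_nonneg ‖d i‖]) (vpi_pos ω)
  have hFeas : Feas = feasibleSet A q ψ := rfl
  have hf : f = maxRatio c A q ψ := by
    ext θ
    simp only [f, maxRatio, c, A, ψ, div_mul_eq_div_div]
  have h0 : (0 : ℝ) ∈ feasibleSet A q ψ :=
    ⟨⟨neg_lt_zero.2 pi_pos, pi_pos⟩, fun i => by simpa only [sub_zero] using hdq' i⟩
  rw [hFeas, hf]
  obtain ⟨θ, hθ, hmin⟩ := exists_isMinOn_maxRatio hψ hq hA hc ⟨0, h0⟩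
  refine ⟨⟨θ, ⟨hθ, hmin⟩, fun θ' hθ' => ?_⟩, fun θ' ⟨hθ', hmin'⟩ => ⟨?_, ?_⟩⟩
  · exact (strictConvexOn_maxRatio hψ hq hA hc).eq_of_isMinOn hθ'.2 hmin hθ'.1 hθ
  · obtain ⟨i, hi⟩ := exists_le_of_isMinOn_of_strictAntiOn isOpen_feasibleSet hθ' hmin'
      (strictAntiOn_maxRatio hψ hq hA hc)
    linarith [ciInf_le (Finite.bddBelow_range fun i => Complex.arg (d i)) i]
  · obtain ⟨i, hi⟩ := exists_ge_of_isMinOn_of_strictMonoOn isOpen_feasibleSet hθ' hmin'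
      (strictMonoOn_maxRatio hψ hq hA hc)
    linarith [le_ciSup (Finite.bddAbove_range fun i => Complex.arg (d i)) i]

/-- the function `f(θ) = max_i f_i(θ)` attains its minimum over the feasible set
of rotations at a unique point `θ* ∈ (−π, π)`, lying in `[min_i φ_i − φ, max_i φ_i − φ]`. -/
theorem stmt18 {N : ℕ} (hN : 0 < N) (ω : ℝ) (hω : ω ∈ Set.Icc (0 : ℝ) 1)
    (φ : ℝ) (hφmem : φ ∈ Set.Icc 0 (Real.pi / 2))
    (hcos : Real.cos φ = ω / Real.sqrt (vpi ω))
    (hsin : Real.sin φ = (1 - ω) / Real.sqrt (vpi ω))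
    (d : Fin N → ℂ) (hd : ∀ i, d i ≠ 0)
    (harg : ∀ i, Complex.arg (d i) ∈ Set.Ioo (φ - Real.pi / 2) (φ + Real.pi / 2))
    (q : Fin N → ℝ) (hq : ∀ i, 0 ≤ q i) (hdq : ∀ i, q i < wlin ω (d i)) :
    let Feas : Set ℝ := {θ | θ ∈ Set.Ioo (-Real.pi) Real.pi ∧ ∀ i, q i <
      ‖d i‖ * Real.sqrt (vpi ω) * Real.cos (Complex.arg (d i) - φ - θ)}
    let f : ℝ → ℝ := fun θ => ⨆ i, (vpi ω * ‖d i‖ ^ 2 - q i ^ 2) /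
      (vpi ω * (‖d i‖ * Real.sqrt (vpi ω) *
        Real.cos (Complex.arg (d i) - φ - θ) - q i))
    (∃! θstar : ℝ, θstar ∈ Feas ∧ ∀ θ ∈ Feas, f θstar ≤ f θ) ∧
    ∀ θstar : ℝ, (θstar ∈ Feas ∧ ∀ θ ∈ Feas, f θstar ≤ f θ) →
      θstar ∈ Set.Icc ((⨅ i, Complex.arg (d i)) - φ) ((⨆ i, Complex.arg (d i)) - φ) :=
  stmt18_general hN ω φ hcos hsin d harg q hq hdq
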